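/- Let λ, μ ∈ ℝ with λ > μ > 0. Then the stabilizer {U ∈ SU(5) : Uᵀ σ(λ, μ) U = σ(λ, μ)} consists exactly of the block-diagonal matrices diag(A, B, 1) with A, B ∈ SU(2), i.e. matrices U with U_{ij} = A_{ij} for i, j ∈ {1, 2}, U_{ij} = B_{i−2, j−2} for i, j ∈ {3, 4}, U_{55} = 1, and all other entries zero; hence the stabilizer of σ(λ, μ) in SU(5) is isomorphic to SU(2) × SU(2). -/

import Mathlib

noncomputable section

open Matrix

/-- The antisymmetric `5×5` matrix `σ(λ, μ)` representing the 2-form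
`λ e¹∧e² + μ e³∧e⁴` on `ℂ⁵`. -/
def sigmaForm (lam mu : ℝ) : Matrix (Fin 5) (Fin 5) ℂ :=
  (lam : ℂ) • (Matrix.single 0 1 1 - Matrix.single 1 0 1) +
    (mu : ℂ) • (Matrix.single 2 3 1 - Matrix.single 3 2 1)

/-- The block-diagonal matrix `diag(A, B, 1)` with `A, B` of size `2×2`. -/
def blockDiag221 (A B : Matrix (Fin 2) (Fin 2) ℂ) : Matrix (Fin 5) (Fin 5) ℂ := fun i j =>
  if hi : (i : ℕ) < 2 then
    (if hj : (j : ℕ) < 2 then A ⟨(i : ℕ), hi⟩ ⟨(j : ℕ), hj⟩ else 0)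
  else if hi4 : (i : ℕ) < 4 then
    (if hj : (j : ℕ) < 2 then 0
     else if hj4 : (j : ℕ) < 4 then B ⟨(i : ℕ) - 2, by omega⟩ ⟨(j : ℕ) - 2, by omega⟩ else 0)
  else if (j : ℕ) < 4 then 0 else 1

/-!
A unitary `U` with `Uᵀ σ U = σ` also preserves `σᴴ σ = diag(λ², λ², μ², μ², 0)` under
conjugation, i.e. commutes with it. As `λ², μ², 0` are pairwise distinct, `U = diag(A, B, c)`.
On such matrices the congruence acts blockwise, and `Aᵀ J A = (det A) J` for `J = !![0, 1; -1, 0]`,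
so `U` fixes `σ` exactly when `det A = det B = 1`; then `det U = 1` forces `c = 1`, while
unitarity of `U` is unitarity of `A`, `B` and `c`.
-/

namespace Matrix

theorem commute_conjTranspose_mul_self_of_transpose_mul_mul_eq {n R : Type*} [Fintype n]
    [DecidableEq n] [CommRing R] [StarRing R] {U σ : Matrix n n R}
    (hU : U ∈ unitaryGroup n R) (h : Uᵀ * σ * U = σ) : Commute U (σᴴ * σ) := by
  have hUT : (Uᵀ)ᴴ * Uᵀ = 1 := by
    rw [conjTranspose_transpose_eq_transpose_conjTranspose, ← transpose_mul,
      ← star_eq_conjTranspose, mem_unitaryGroup_iff.1 hU, transpose_one]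
  have hconj : Uᴴ * (σᴴ * σ) * U = σᴴ * σ := by
    calc Uᴴ * (σᴴ * σ) * U = Uᴴ * σᴴ * ((Uᵀ)ᴴ * Uᵀ) * σ * U := by rw [hUT]; noncomm_ring
      _ = (Uᵀ * σ * U)ᴴ * (Uᵀ * σ * U) := by simp only [conjTranspose_mul]; noncomm_ring
      _ = σᴴ * σ := by rw [h]
  calc U * (σᴴ * σ) = U * (Uᴴ * (σᴴ * σ) * U) := by rw [hconj]
    _ = (U * Uᴴ) * (σᴴ * σ) * U := by noncomm_ring
    _ = σᴴ * σ * U := by rw [← star_eq_conjTranspose, mem_unitaryGroup_iff.1 hU, one_mul]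

theorem apply_eq_zero_of_commute_diagonal {n R : Type*} [Fintype n] [DecidableEq n] [CommRing R]
    [NoZeroDivisors R] {U : Matrix n n R} {d : n → R} (h : Commute U (diagonal d)) {i j : n}
    (hij : d i ≠ d j) : U i j = 0 := by
  have hij' := congrFun₂ h.eq i j
  rw [mul_diagonal, diagonal_mul] at hij'
  have : (d j - d i) * U i j = 0 := by linear_combination hij'
  exact (mul_eq_zero.1 this).resolve_left (sub_ne_zero.2 hij.symm)

section BlockDiag

variable {R : Type*}

def finTwoTwoOneEquiv : Fin 2 ⊕ (Fin 2 ⊕ Fin 1) ≃ Fin 5 :=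
  (Equiv.sumCongr (Equiv.refl _) finSumFinEquiv).trans finSumFinEquiv

def blockDiag5 [Zero R] (A B : Matrix (Fin 2) (Fin 2) R) (c : R) : Matrix (Fin 5) (Fin 5) R :=
  reindex finTwoTwoOneEquiv finTwoTwoOneEquiv
    (fromBlocks A 0 0 (fromBlocks B 0 0 (of fun _ _ => c)))

theorem blockDiag5_eq [Zero R] (A B : Matrix (Fin 2) (Fin 2) R) (c : R) :
    blockDiag5 A B c = !![A 0 0, A 0 1, 0, 0, 0; A 1 0, A 1 1, 0, 0, 0; 0, 0, B 0 0, B 0 1, 0;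
      0, 0, B 1 0, B 1 1, 0; 0, 0, 0, 0, c] := by
  ext i j; fin_cases i <;> fin_cases j <;> rfl

theorem blockDiag5_inj [Zero R] {A B A' B' : Matrix (Fin 2) (Fin 2) R} {c c' : R} :
    blockDiag5 A B c = blockDiag5 A' B' c' ↔ A = A' ∧ B = B' ∧ c = c' := by
  refine ⟨fun h => ?_, by rintro ⟨rfl, rfl, rfl⟩; rfl⟩
  obtain ⟨hA, -, -, hBc⟩ := fromBlocks_inj.1 ((reindex _ _).injective h)
  obtain ⟨hB, -, -, hc⟩ := fromBlocks_inj.1 hBc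
  exact ⟨hA, hB, congrFun₂ hc 0 0⟩

theorem blockDiag5_one [Zero R] [One R] : blockDiag5 (1 : Matrix (Fin 2) (Fin 2) R) 1 1 = 1 := by
  have : (of fun _ _ => 1 : Matrix (Fin 1) (Fin 1) R) = 1 := by
    ext i j; fin_cases i; fin_cases j; rfl
  rw [blockDiag5, this, fromBlocks_one, fromBlocks_one, reindex_apply, submatrix_one_equiv]

theorem blockDiag5_mul [NonUnitalNonAssocSemiring R] (A B A' B' : Matrix (Fin 2) (Fin 2) R)
    (c c' : R) :
    blockDiag5 A B c * blockDiag5 A' B' c' = blockDiag5 (A * A') (B * B') (c * c') := by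
  have : (of fun _ _ => c : Matrix (Fin 1) (Fin 1) R) * (of fun _ _ => c') =
      of fun _ _ => c * c' := by
    ext; simp [mul_apply]
  simp only [blockDiag5, reindex_apply, submatrix_mul_equiv, fromBlocks_multiply, this,
    Matrix.mul_zero, Matrix.zero_mul, add_zero, zero_add]

theorem blockDiag5_transpose [Zero R] (A B : Matrix (Fin 2) (Fin 2) R) (c : R) :
    (blockDiag5 A B c)ᵀ = blockDiag5 Aᵀ Bᵀ c := by
  simp only [blockDiag5, transpose_reindex, fromBlocks_transpose, transpose_zero]
  rfl

theorem star_blockDiag5 [AddMonoid R] [StarAddMonoid R] (A B : Matrix (Fin 2) (Fin 2) R) (c : R) :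
    star (blockDiag5 A B c) = blockDiag5 (star A) (star B) (star c) := by
  simp only [blockDiag5, star_eq_conjTranspose, conjTranspose_reindex, fromBlocks_conjTranspose,
    conjTranspose_zero]
  rfl

theorem det_blockDiag5 [CommRing R] (A B : Matrix (Fin 2) (Fin 2) R) (c : R) :
    (blockDiag5 A B c).det = A.det * B.det * c := by
  simp [blockDiag5, det_fromBlocks_zero₂₁, det_unique, mul_assoc]

theorem blockDiag5_mem_unitaryGroup_iff [CommRing R] [StarRing R] {A B : Matrix (Fin 2) (Fin 2) R}
    {c : R} : blockDiag5 A B c ∈ unitaryGroup (Fin 5) R ↔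
      A ∈ unitaryGroup (Fin 2) R ∧ B ∈ unitaryGroup (Fin 2) R ∧ c ∈ unitary R := by
  simp only [mem_unitaryGroup_iff', Unitary.mem_iff_star_mul_self, star_blockDiag5,
    blockDiag5_mul, ← blockDiag5_one, blockDiag5_inj]

end BlockDiag

section Symplectic

variable {R : Type*} [CommRing R]

def J₂ : Matrix (Fin 2) (Fin 2) R := !![0, 1; -1, 0]

theorem transpose_mul_J₂_mul (A : Matrix (Fin 2) (Fin 2) R) : Aᵀ * J₂ * A = A.det • J₂ := by
  ext i j
  fin_cases i <;> fin_cases j <;> simp [J₂, det_fin_two, mul_apply, Fin.sum_univ_two] <;> ring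

theorem smul_J₂_inj [Nontrivial R] {a b : R} :
    a • (J₂ : Matrix (Fin 2) (Fin 2) R) = b • J₂ ↔ a = b :=
  ⟨fun h => by simpa [J₂] using congrFun₂ h 0 1, fun h => h ▸ rfl⟩

end Symplectic

end Matrix

theorem blockDiag221_eq_blockDiag5 (A B : Matrix (Fin 2) (Fin 2) ℂ) :
    blockDiag221 A B = blockDiag5 A B 1 := by
  ext i j
  fin_cases i <;> fin_cases j <;> rfl

theorem sigmaForm_eq_blockDiag5 (lam mu : ℝ) :
    sigmaForm lam mu = blockDiag5 ((lam : ℂ) • J₂) ((mu : ℂ) • J₂) 0 := by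
  rw [blockDiag5_eq]
  ext i j
  fin_cases i <;> fin_cases j <;> simp [sigmaForm, J₂]

theorem conjTranspose_sigmaForm_mul_self (lam mu : ℝ) :
    (sigmaForm lam mu)ᴴ * sigmaForm lam mu =
      diagonal ![(lam : ℂ) ^ 2, lam ^ 2, mu ^ 2, mu ^ 2, 0] := by
  rw [sigmaForm_eq_blockDiag5, ← star_eq_conjTranspose, star_blockDiag5, blockDiag5_mul,
    blockDiag5_eq]
  ext i j
  fin_cases i <;> fin_cases j <;> simp [J₂, sq, mul_apply, Fin.sum_univ_two]

theorem exists_eq_blockDiag5_of_commute_conjTranspose_sigmaForm_mul_self {lam mu : ℝ}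
    (hlam : lam ≠ 0) (hmu : mu ≠ 0) (hne : lam ^ 2 ≠ mu ^ 2) {U : Matrix (Fin 5) (Fin 5) ℂ}
    (h : Commute U ((sigmaForm lam mu)ᴴ * sigmaForm lam mu)) : ∃ A B c, U = blockDiag5 A B c := by
  rw [conjTranspose_sigmaForm_mul_self] at h
  have hlam2 : (lam : ℂ) ^ 2 ≠ 0 := by exact_mod_cast pow_ne_zero 2 hlam
  have hmu2 : (mu : ℂ) ^ 2 ≠ 0 := by exact_mod_cast pow_ne_zero 2 hmu
  have hne' : (lam : ℂ) ^ 2 ≠ mu ^ 2 := by exact_mod_cast hne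
  refine ⟨!![U 0 0, U 0 1; U 1 0, U 1 1], !![U 2 2, U 2 3; U 3 2, U 3 3], U 4 4, ?_⟩
  rw [blockDiag5_eq]
  ext i j
  fin_cases i <;> fin_cases j <;>
    first
    | rfl
    | exact apply_eq_zero_of_commute_diagonal h
        (by simp [hlam2, hmu2, hne', hlam2.symm, hmu2.symm, hne'.symm])

theorem blockDiag5_transpose_mul_sigmaForm_mul_eq_iff {lam mu : ℝ} (hlam : lam ≠ 0) (hmu : mu ≠ 0)
    {A B : Matrix (Fin 2) (Fin 2) ℂ} {c : ℂ} :
    (blockDiag5 A B c)ᵀ * sigmaForm lam mu * blockDiag5 A B c = sigmaForm lam mu ↔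
      A.det = 1 ∧ B.det = 1 := by
  simp only [sigmaForm_eq_blockDiag5, blockDiag5_transpose, blockDiag5_mul, Matrix.mul_smul,
    Matrix.smul_mul, transpose_mul_J₂_mul, smul_smul, mul_zero, zero_mul, blockDiag5_inj,
    smul_J₂_inj, and_true, mul_eq_left₀ (Complex.ofReal_ne_zero.2 hlam),
    mul_eq_left₀ (Complex.ofReal_ne_zero.2 hmu)]

theorem stabilizer_sigma_su2_su2 (lam mu : ℝ) (h1 : mu < lam) (h2 : 0 < mu) :
    ∀ U : Matrix (Fin 5) (Fin 5) ℂ,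
      (U ∈ Matrix.specialUnitaryGroup (Fin 5) ℂ ∧
          Uᵀ * sigmaForm lam mu * U = sigmaForm lam mu) ↔
        ∃ A ∈ Matrix.specialUnitaryGroup (Fin 2) ℂ,
          ∃ B ∈ Matrix.specialUnitaryGroup (Fin 2) ℂ, U = blockDiag221 A B := by
  have hmu : mu ≠ 0 := h2.ne'
  have hlam : lam ≠ 0 := (h2.trans h1).ne'
  have hne : lam ^ 2 ≠ mu ^ 2 := by nlinarith
  intro U
  constructor
  · rintro ⟨hU, hσ⟩
    rw [mem_specialUnitaryGroup_iff] at hU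
    obtain ⟨A, B, c, rfl⟩ := exists_eq_blockDiag5_of_commute_conjTranspose_sigmaForm_mul_self
      hlam hmu hne (commute_conjTranspose_mul_self_of_transpose_mul_mul_eq hU.1 hσ)
    obtain ⟨hA, hB, -⟩ := blockDiag5_mem_unitaryGroup_iff.1 hU.1
    obtain ⟨hdetA, hdetB⟩ := (blockDiag5_transpose_mul_sigmaForm_mul_eq_iff hlam hmu).1 hσ
    have hc : c = 1 := by simpa [det_blockDiag5, hdetA, hdetB] using hU.2
    exact ⟨A, mem_specialUnitaryGroup_iff.2 ⟨hA, hdetA⟩, B,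
      mem_specialUnitaryGroup_iff.2 ⟨hB, hdetB⟩, by rw [hc, blockDiag221_eq_blockDiag5]⟩
  · rintro ⟨A, hA, B, hB, rfl⟩
    rw [mem_specialUnitaryGroup_iff] at hA hB
    rw [blockDiag221_eq_blockDiag5, blockDiag5_transpose_mul_sigmaForm_mul_eq_iff hlam hmu,
      mem_specialUnitaryGroup_iff, blockDiag5_mem_unitaryGroup_iff, det_blockDiag5]
    exact ⟨⟨⟨hA.1, hB.1, one_mem _⟩, by simp [hA.2, hB.2]⟩, hA.2, hB.2⟩
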